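/- Let (A,Γ,G,≺) be a linear GIFS on ℝ^d with open set condition and 0 < h_i := H^δ(E_i) < ∞ for all i, let G* be its measure-recording GIFS, and let π_i : Γ_i^∞ → E_i and ρ_i : Γ_i^∞ → F_i = [0,h_i] be the projections of G and G* respectively. If x ∈ F_i has two ρ_i-codings ω, γ ∈ Γ_i^∞ (i.e. ρ_i(ω) = ρ_i(γ) = x), then π_i(ω) = π_i(γ). Consequently ψ_i := π_i ∘ ρ_i^{−1} is a well-defined map from F_i to E_i. -/

import Mathlib

open MeasureTheory Set

noncomputable section

/-- A graph-directed iterated function system (GIFS) with vertex set `Fin N`,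
a finite edge set, and a contracting similitude of ratio `r e ∈ (0,1)` for each edge. -/
structure GIFS (X : Type) [MetricSpace X] (N : ℕ) where
  Edge : Type
  fintypeEdge : Fintype Edge
  src : Edge → Fin N
  tgt : Edge → Fin N
  r : Edge → ℝ
  r_pos : ∀ e, 0 < r e
  r_lt_one : ∀ e, r e < 1
  g : Edge → X → X
  g_sim : ∀ e x y, dist (g e x) (g e y) = r e * dist x y

attribute [instance] GIFS.fintypeEdge

/-- The finite prefix of length `n` of an infinite word. -/
def prefixList {α : Type} (ω : ℕ → α) (n : ℕ) : List α := List.ofFn fun k : Fin n => ω k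

/-- Spectral radius of a real square matrix: supremum of the moduli of its
complex eigenvalues. -/
def specRad {n : ℕ} (A : Matrix (Fin n) (Fin n) ℝ) : ℝ :=
  sSup ((fun z : ℂ => ‖z‖) '' spectrum ℂ (A.map Complex.ofReal))

namespace GIFS

variable {X : Type} [MetricSpace X] {N : ℕ}

/-- `γ` is a finite path (possibly empty) starting from the vertex `i`. -/
def IsPathFrom (G : GIFS X N) (i : Fin N) (γ : List G.Edge) : Prop :=
  γ.Chain' (fun a b => G.tgt a = G.src b) ∧ ∀ e ∈ γ.head?, G.src e = i

/-- The terminal vertex of a finite path starting at `i`. -/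
def pathTgt (G : GIFS X N) (i : Fin N) (γ : List G.Edge) : Fin N :=
  (γ.getLast?).elim i G.tgt

/-- The composition `g_{γ₁} ∘ ⋯ ∘ g_{γ_n}` along a finite path. -/
def pathMap (G : GIFS X N) (γ : List G.Edge) : X → X :=
  γ.foldr (fun e f => G.g e ∘ f) id

/-- The cylinder set `E_γ = g_{γ₁} ∘ ⋯ ∘ g_{γ_n} (E_{t(γ)})` of a finite path from `i`. -/
def pathSet (G : GIFS X N) (E : Fin N → Set X) (i : Fin N) (γ : List G.Edge) : Set X :=
  G.pathMap γ '' E (G.pathTgt i γ)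

/-- `E` is the family of invariant sets of the GIFS: nonempty compact sets
satisfying the set equations. -/
def IsInvariant (G : GIFS X N) (E : Fin N → Set X) : Prop :=
  (∀ i, (E i).Nonempty) ∧ (∀ i, IsCompact (E i)) ∧
    ∀ i, E i = ⋃ e ∈ {e : G.Edge | G.src e = i}, G.g e '' E (G.tgt e)

/-- The open set condition witnessed by a given family of open sets. -/
def OSCWith (G : GIFS X N) (U : Fin N → Set X) : Prop :=
  (∀ i, (U i).Nonempty ∧ IsOpen (U i)) ∧
  (∀ e : G.Edge, G.g e '' U (G.tgt e) ⊆ U (G.src e)) ∧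
  ∀ e f : G.Edge, e ≠ f → G.src e = G.src f →
    Disjoint (G.g e '' U (G.tgt e)) (G.g f '' U (G.tgt f))

/-- The open set condition. -/
def OSC (G : GIFS X N) : Prop := ∃ U, G.OSCWith U

/-- The base graph is strongly connected. -/
def StronglyConnected (G : GIFS X N) : Prop :=
  ∀ i j : Fin N, ∃ γ : List G.Edge, γ ≠ [] ∧ G.IsPathFrom i γ ∧ G.pathTgt i γ = j

/-- The matrix `M(t)` with entries `M(t)_{ij} = ∑_{e ∈ Γ_{ij}} r_e ^ t`. -/
def M (G : GIFS X N) (t : ℝ) : Matrix (Fin N) (Fin N) ℝ :=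
  Matrix.of fun i j => ∑ e : G.Edge, if G.src e = i ∧ G.tgt e = j then G.r e ^ t else 0

/-- `δ` is the similarity dimension: the (unique) positive real with `ρ(M(δ)) = 1`. -/
def IsSimDim (G : GIFS X N) (δ : ℝ) : Prop := 0 < δ ∧ specRad (G.M δ) = 1

/-- The space of infinite paths emanating from the vertex `i`. -/
def InfPath (G : GIFS X N) (i : Fin N) : Type :=
  {ω : ℕ → G.Edge // G.src (ω 0) = i ∧ ∀ n, G.tgt (ω n) = G.src (ω (n + 1))}

instance (G : GIFS X N) : MeasurableSpace G.Edge := ⊤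

instance (G : GIFS X N) (i : Fin N) : MeasurableSpace (G.InfPath i) :=
  MeasurableSpace.comap Subtype.val MeasurableSpace.pi

/-- `π` is the symbolic projection `Γ_i^∞ → E_i` : the image of an infinite path
belongs to every cylinder set of its finite prefixes. -/
def IsCoding (G : GIFS X N) (E : Fin N → Set X) (i : Fin N) (π : G.InfPath i → X) : Prop :=
  ∀ (ω : G.InfPath i) (n : ℕ), π ω ∈ G.pathSet E i (prefixList ω.1 n)

end GIFS

/-- An ordered GIFS: a GIFS with a partial order on the edges which restricts to
a linear order on each `Γ_i` (edges emanating from `i`), edges emanating from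
distinct vertices being incomparable. -/
structure OGIFS (X : Type) [MetricSpace X] (N : ℕ) extends GIFS X N where
  elt : Edge → Edge → Prop
  elt_src : ∀ {a b}, elt a b → src a = src b
  elt_irrefl : ∀ a, ¬ elt a a
  elt_trans : ∀ {a b c}, elt a b → elt b c → elt a c
  elt_total : ∀ a b, src a = src b → elt a b ∨ a = b ∨ elt b a

namespace OGIFS

variable {X : Type} [MetricSpace X] {N : ℕ}

/-- The induced dictionary order on finite paths. -/
def PathLt (G : OGIFS X N) (γ ω : List G.Edge) : Prop := List.Lex G.elt γ ω

/-- Two adjacent edges in some `Γ_i`: consecutive in the order `≺`. -/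
def AdjacentEdges (G : OGIFS X N) (e f : G.Edge) : Prop :=
  G.elt e f ∧ ¬ ∃ e', G.elt e e' ∧ G.elt e' f

/-- Two same-length paths from `i`, adjacent (consecutive) in the dictionary order. -/
def Adjacent (G : OGIFS X N) (i : Fin N) (γ ω : List G.Edge) : Prop :=
  G.toGIFS.IsPathFrom i γ ∧ G.toGIFS.IsPathFrom i ω ∧ γ.length = ω.length ∧
  G.PathLt γ ω ∧
  ¬ ∃ η : List G.Edge, G.toGIFS.IsPathFrom i η ∧ η.length = γ.length ∧
      G.PathLt γ η ∧ G.PathLt η ω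

/-- A linear GIFS: every two adjacent cylinders of invariant sets intersect. -/
def IsLinear (G : OGIFS X N) (E : Fin N → Set X) : Prop :=
  ∀ (i : Fin N) (γ ω : List G.Edge), G.Adjacent i γ ω →
    (G.toGIFS.pathSet E i γ ∩ G.toGIFS.pathSet E i ω).Nonempty

/-- An infinite path from `i` is lowest if all its finite prefixes are lowest in the
dictionary order among same-length paths from `i`. -/
def IsLowest (G : OGIFS X N) (i : Fin N) (ω : G.toGIFS.InfPath i) : Prop :=
  ∀ (n : ℕ) (γ : List G.Edge), G.toGIFS.IsPathFrom i γ → γ.length = n →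
    γ = prefixList ω.1 n ∨ G.PathLt (prefixList ω.1 n) γ

/-- An infinite path from `i` is highest if all its finite prefixes are highest. -/
def IsHighest (G : OGIFS X N) (i : Fin N) (ω : G.toGIFS.InfPath i) : Prop :=
  ∀ (n : ℕ) (γ : List G.Edge), G.toGIFS.IsPathFrom i γ → γ.length = n →
    γ = prefixList ω.1 n ∨ G.PathLt γ (prefixList ω.1 n)

/-- `a` is the head of `E_i`: the projection of the lowest infinite path from `i`. -/
def IsHead (G : OGIFS X N) (E : Fin N → Set X) (i : Fin N) (a : X) : Prop :=
  ∃ ω : G.toGIFS.InfPath i, G.IsLowest i ω ∧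
    ∀ n : ℕ, a ∈ G.toGIFS.pathSet E i (prefixList ω.1 n)

/-- `a` is the tail of `E_i`: the projection of the highest infinite path from `i`. -/
def IsTail (G : OGIFS X N) (E : Fin N → Set X) (i : Fin N) (a : X) : Prop :=
  ∃ ω : G.toGIFS.InfPath i, G.IsHighest i ω ∧
    ∀ n : ℕ, a ∈ G.toGIFS.pathSet E i (prefixList ω.1 n)

/-- The chain condition: for adjacent edges `e ≺ f` emanating from a common vertex,
`g_e(tail of E_{t(e)}) = g_f(head of E_{t(f)})`. -/
def ChainCondition (G : OGIFS X N) (E : Fin N → Set X) : Prop :=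
  ∀ e f : G.Edge, G.AdjacentEdges e f →
    ∀ b a : X, G.IsTail E (G.tgt e) b → G.IsHead E (G.tgt f) a → G.g e b = G.g f a

open Classical in
/-- Translation part of the maps of the measure-recording GIFS:
`b_e = ∑_{e' ≺ e} h_{t(e')} r_{e'}^δ`. -/
def bCoef (G : OGIFS X N) (δ : ℝ) (h : Fin N → ℝ) (e : G.Edge) : ℝ :=
  ∑ e' : G.Edge, if G.elt e' e then h (G.tgt e') * G.r e' ^ δ else 0

/-- The maps `f_e (x) = r_e^δ x + b_e` of the measure-recording GIFS. -/
def fmap (G : OGIFS X N) (δ : ℝ) (h : Fin N → ℝ) (e : G.Edge) : ℝ → ℝ :=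
  fun x => G.r e ^ δ * x + G.bCoef δ h e

/-- Composition of the measure-recording maps along a finite path. -/
def fPathMap (G : OGIFS X N) (δ : ℝ) (h : Fin N → ℝ) (γ : List G.Edge) : ℝ → ℝ :=
  γ.foldr (fun e f => G.fmap δ h e ∘ f) id

/-- Cylinder intervals `F_γ` of the measure-recording GIFS (with `F_i = [0, h_i]`). -/
def fPathSet (G : OGIFS X N) (δ : ℝ) (h : Fin N → ℝ) (i : Fin N) (γ : List G.Edge) : Set ℝ :=
  G.fPathMap δ h γ '' Icc 0 (h (G.toGIFS.pathTgt i γ))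

/-- `ρ` is the symbolic projection `Γ_i^∞ → F_i` of the measure-recording GIFS. -/
def IsFCoding (G : OGIFS X N) (δ : ℝ) (h : Fin N → ℝ) (i : Fin N)
    (ρ : G.toGIFS.InfPath i → ℝ) : Prop :=
  ∀ (ω : G.toGIFS.InfPath i) (n : ℕ), ρ ω ∈ G.fPathSet δ h i (prefixList ω.1 n)

end OGIFS

/-- An optimal parametrization of an `s`-set `K`: a surjection `[0,1] → K` which is
almost one-to-one, measure-preserving and `1/s`-Hölder continuous. -/
def OptimalParam {X : Type} [MetricSpace X] [MeasurableSpace X] [BorelSpace X]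
    (s : ℝ) (K : Set X) (ψ : ℝ → X) : Prop :=
  ψ '' Icc (0:ℝ) 1 = K ∧
  (∃ K' ⊆ K, ∃ I' ⊆ Icc (0:ℝ) 1,
      μH[s] (K \ K') = 0 ∧ volume (Icc (0:ℝ) 1 \ I') = 0 ∧ BijOn ψ I' K') ∧
  (∀ F : Set ℝ, F ⊆ Icc (0:ℝ) 1 → MeasurableSet F →
      μH[s] (ψ '' F) = μH[s] K * volume F) ∧
  (∀ B : Set X, B ⊆ K → MeasurableSet B →
      volume (ψ ⁻¹' B ∩ Icc (0:ℝ) 1) = (μH[s] K)⁻¹ * μH[s] B) ∧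
  ∃ c' : NNReal, 0 < c' ∧ HolderOnWith c' (Real.toNNReal (1 / s)) ψ (Icc (0:ℝ) 1)

end

/-!
Subadditivity and scaling of `μH[δ]` give `h_j ≤ ∑_{e ∈ Γ_j} h_{t(e)} r_e^δ`. Conversely, `ρ` codes
the path that reaches `j` and then always takes the `≺`-largest edge; since `F_j` must contain
the cylinder intervals of that path, whose lengths shrink geometrically, the reverse inequality
holds at every vertex reachable from `i`. Then the cylinder intervals `F_γ` of same-length paths
are ordered like the paths and have positive length, so the length-`n` prefixes of two
`ρ`-codings of the same point are equal or adjacent. By linearity the corresponding cylinders of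
`E_i` meet, and their diameters tend to `0`.
-/

lemma prefixList_succ {α : Type} (ω : ℕ → α) (n : ℕ) :
    prefixList ω (n + 1) = ω 0 :: prefixList (fun k => ω (k + 1)) n := by
  simp [prefixList, List.ofFn_succ]

@[simp] lemma length_prefixList {α : Type} (ω : ℕ → α) (n : ℕ) : (prefixList ω n).length = n := by
  simp [prefixList]

lemma mem_prefixList {α : Type} {ω : ℕ → α} {n : ℕ} {a : α} :
    a ∈ prefixList ω n ↔ ∃ k : Fin n, ω k = a :=
  List.mem_ofFn

lemma le_of_forall_le_add_mul_pow {a b C c : ℝ} (hc0 : 0 ≤ c) (hc1 : c < 1)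
    (h : ∀ n : ℕ, a ≤ b + C * c ^ n) : a ≤ b :=
  ge_of_tendsto
    (by simpa using ((tendsto_pow_atTop_nhds_zero_of_lt_one hc0 hc1).const_mul C).const_add b)
    (Filter.Eventually.of_forall h)

namespace GIFS

open Finset

variable {X : Type} [MetricSpace X] {N : ℕ} (G : GIFS X N)

lemma isPathFrom_nil (i : Fin N) : G.IsPathFrom i [] := ⟨List.isChain_nil, by simp⟩

variable {G} in
lemma isPathFrom_cons_iff {i : Fin N} {e : G.Edge} {l : List G.Edge} :
    G.IsPathFrom i (e :: l) ↔ G.src e = i ∧ G.IsPathFrom (G.tgt e) l := by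
  show List.IsChain _ (e :: l) ∧ _ ↔ _ ∧ List.IsChain _ l ∧ _
  simp only [List.isChain_cons, List.head?_cons, Option.mem_def, Option.some.injEq, forall_eq']
  constructor
  · rintro ⟨⟨hhead, hchain⟩, hsrc⟩
    exact ⟨hsrc, hchain, fun f hf => (hhead f hf).symm⟩
  · rintro ⟨hsrc, hchain, hhead⟩
    exact ⟨⟨fun f hf => (hhead f hf).symm, hchain⟩, hsrc⟩

lemma pathTgt_cons (i : Fin N) (e : G.Edge) (l : List G.Edge) :
    G.pathTgt i (e :: l) = G.pathTgt (G.tgt e) l := by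
  cases l <;> simp [pathTgt, List.getLast?_cons]

def Reaches (i j : Fin N) : Prop :=
  ∃ σ : List G.Edge, G.IsPathFrom i σ ∧ G.pathTgt i σ = j

lemma reaches_refl (i : Fin N) : G.Reaches i i := ⟨[], G.isPathFrom_nil i, rfl⟩

variable {G}

lemma Reaches.cons {i j : Fin N} {e : G.Edge} (he : G.src e = i) (h : G.Reaches (G.tgt e) j) :
    G.Reaches i j := by
  obtain ⟨σ, hσ, rfl⟩ := h
  exact ⟨e :: σ, isPathFrom_cons_iff.mpr ⟨he, hσ⟩, G.pathTgt_cons i e σ⟩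

def InfPath.tail {i : Fin N} (ω : G.InfPath i) : G.InfPath (G.tgt (ω.1 0)) :=
  ⟨fun n => ω.1 (n + 1), (ω.2.2 0).symm, fun n => ω.2.2 (n + 1)⟩

def InfPath.cons {i : Fin N} (e : G.Edge) (he : G.src e = i) (ω : G.InfPath (G.tgt e)) :
    G.InfPath i :=
  ⟨fun n => Nat.casesOn n e ω.1, he, fun n => by cases n <;> simp [ω.2.1, ω.2.2]⟩

lemma isPathFrom_prefixList {i : Fin N} (ω : G.InfPath i) (n : ℕ) :
    G.IsPathFrom i (prefixList ω.1 n) := by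
  induction n generalizing i with
  | zero => exact G.isPathFrom_nil i
  | succ n ih =>
    rw [prefixList_succ, isPathFrom_cons_iff]
    exact ⟨ω.2.1, ih ω.tail⟩

lemma exists_infPath_prefixList_eq_append {i j : Fin N} {σ : List G.Edge}
    (hσ : G.IsPathFrom i σ) (hj : G.pathTgt i σ = j) (μ : G.InfPath j) :
    ∃ θ : G.InfPath i, ∀ n, prefixList θ.1 (σ.length + n) = σ ++ prefixList μ.1 n := by
  induction σ generalizing i with
  | nil =>
    obtain rfl : i = j := hj
    exact ⟨μ, by simp⟩
  | cons e σ ih =>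
    obtain ⟨he, hσ⟩ := isPathFrom_cons_iff.mp hσ
    obtain ⟨θ, hθ⟩ := ih hσ (by rwa [pathTgt_cons] at hj)
    refine ⟨InfPath.cons e he θ, fun n => ?_⟩
    rw [List.length_cons, add_right_comm, prefixList_succ, List.cons_append, ← hθ n]
    rfl

lemma exists_infPath_forall (P : G.Edge → Prop) (hP : ∀ v, ∃ e, G.src e = v ∧ P e)
    (v : Fin N) : ∃ ω : G.InfPath v, ∀ n, P (ω.1 n) := by
  choose next hsrc hnext using hP
  let ω : ℕ → G.Edge := fun n => Nat.rec (next v) (fun _ e => next (G.tgt e)) n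
  exact ⟨⟨ω, hsrc v, fun n => (hsrc _).symm⟩, fun n => by cases n <;> exact hnext _⟩

lemma IsInvariant.exists_src_eq {E : Fin N → Set X} (hE : G.IsInvariant E) (v : Fin N) :
    ∃ e, G.src e = v := by
  obtain ⟨x, hx⟩ := hE.1 v
  rw [hE.2.2 v, mem_iUnion₂] at hx
  obtain ⟨e, he, -⟩ := hx
  exact ⟨e, he⟩

variable (G)

def pathRatio (l : List G.Edge) : ℝ := (l.map G.r).prod

@[simp] lemma pathRatio_nil : G.pathRatio [] = 1 := rfl

@[simp] lemma pathRatio_cons (e : G.Edge) (l : List G.Edge) :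
    G.pathRatio (e :: l) = G.r e * G.pathRatio l := rfl

lemma pathRatio_pos (l : List G.Edge) : 0 < G.pathRatio l :=
  List.prod_pos fun _ hx => by
    obtain ⟨e, -, rfl⟩ := List.mem_map.mp hx
    exact G.r_pos e

lemma pathRatio_le_pow {c : ℝ} (hc : ∀ e, G.r e ≤ c) (l : List G.Edge) :
    G.pathRatio l ≤ c ^ l.length := by
  simpa [pathRatio] using List.prod_map_le_prod_map₀ G.r (fun _ => c)
    (fun e _ => (G.r_pos e).le) fun e _ => hc e

lemma exists_r_le_lt_one : ∃ c, 0 ≤ c ∧ c < 1 ∧ ∀ e, G.r e ≤ c := by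
  rcases isEmpty_or_nonempty G.Edge with hE | hE
  · exact ⟨0, le_rfl, zero_lt_one, isEmptyElim⟩
  · obtain ⟨e₀, he₀⟩ := Finite.exists_max G.r
    exact ⟨G.r e₀, (G.r_pos e₀).le, G.r_lt_one e₀, he₀⟩

lemma dist_pathMap (l : List G.Edge) (x y : X) :
    dist (G.pathMap l x) (G.pathMap l y) = G.pathRatio l * dist x y := by
  induction l with
  | nil => simp [pathMap]
  | cons e l ih =>
    simp only [pathMap, List.foldr_cons, Function.comp_apply, pathRatio_cons] at ih ⊢
    rw [G.g_sim, ih, mul_assoc]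

lemma lipschitzWith_pathMap (l : List G.Edge) :
    LipschitzWith (Real.toNNReal (G.pathRatio l)) (G.pathMap l) :=
  LipschitzWith.of_dist_le_mul fun x y => by
    rw [dist_pathMap, Real.coe_toNNReal _ (G.pathRatio_pos l).le]

lemma lipschitzWith_g (e : G.Edge) : LipschitzWith (Real.toNNReal (G.r e)) (G.g e) := by
  simpa [pathMap] using G.lipschitzWith_pathMap [e]

variable {G}

lemma diam_pathSet_le {E : Fin N → Set X} {i : Fin N} {l : List G.Edge}
    (hE : Bornology.IsBounded (E (G.pathTgt i l))) :
    Metric.diam (G.pathSet E i l) ≤ G.pathRatio l * Metric.diam (E (G.pathTgt i l)) := by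
  simpa [pathSet, Real.coe_toNNReal _ (G.pathRatio_pos l).le] using
    (G.lipschitzWith_pathMap l).diam_image_le _ hE

lemma isBounded_pathSet {E : Fin N → Set X} {i : Fin N} {l : List G.Edge}
    (hE : Bornology.IsBounded (E (G.pathTgt i l))) : Bornology.IsBounded (G.pathSet E i l) :=
  (G.lipschitzWith_pathMap l).isBounded_image hE

lemma IsCoding.eq_of_forall_pathSet_inter_nonempty {E : Fin N → Set X} {i : Fin N}
    {π : G.InfPath i → X} (hπ : G.IsCoding E i π) (hE : ∀ v, Bornology.IsBounded (E v))
    {ω γ : G.InfPath i}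
    (hωγ : ∀ n, (G.pathSet E i (prefixList ω.1 n) ∩ G.pathSet E i (prefixList γ.1 n)).Nonempty) :
    π ω = π γ := by
  obtain ⟨c, hc0, hc1, hc⟩ := G.exists_r_le_lt_one
  obtain ⟨D, hD⟩ := Finite.exists_le fun v => Metric.diam (E v)
  have hdist : ∀ {x y : X} (l : List G.Edge), x ∈ G.pathSet E i l → y ∈ G.pathSet E i l →
      dist x y ≤ D * c ^ l.length := fun l hx hy =>
    calc _ ≤ Metric.diam (G.pathSet E i l) :=
          Metric.dist_le_diam_of_mem (isBounded_pathSet (hE _)) hx hy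
      _ ≤ G.pathRatio l * Metric.diam (E (G.pathTgt i l)) := diam_pathSet_le (hE _)
      _ ≤ c ^ l.length * D :=
          mul_le_mul (G.pathRatio_le_pow hc l) (hD _) Metric.diam_nonneg (pow_nonneg hc0 _)
      _ = D * c ^ l.length := mul_comm _ _
  refine dist_le_zero.mp (le_of_forall_le_add_mul_pow hc0 hc1 (C := 2 * D) fun n => ?_)
  obtain ⟨z, hzω, hzγ⟩ := hωγ n
  calc dist (π ω) (π γ) ≤ dist (π ω) z + dist z (π γ) := dist_triangle _ _ _
    _ ≤ D * c ^ n + D * c ^ n := by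
        simpa using add_le_add (hdist _ (hπ ω n) hzω) (hdist _ hzγ (hπ γ n))
    _ = 0 + 2 * D * c ^ n := by ring

variable (G) in
/-- The total length of the first-level subintervals of `F_j`. -/
noncomputable def childSum (δ : ℝ) (h : Fin N → ℝ) (j : Fin N) : ℝ :=
  ∑ e ∈ univ.filter (G.src · = j), h (G.tgt e) * G.r e ^ δ

variable [MeasurableSpace X] [BorelSpace X] {E : Fin N → Set X}

lemma hausdorffMeasure_le_sum_of_isInvariant (hE : G.IsInvariant E) {δ : ℝ} (hδ : 0 ≤ δ)
    (j : Fin N) :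
    μH[δ] (E j) ≤
      ∑ e ∈ univ.filter (G.src · = j), ENNReal.ofReal (G.r e) ^ δ * μH[δ] (E (G.tgt e)) :=
  calc μH[δ] (E j) = μH[δ] (⋃ e ∈ univ.filter (G.src · = j), G.g e '' E (G.tgt e)) := by
        rw [hE.2.2 j]
        simp only [Finset.mem_filter, Finset.mem_univ, true_and, Set.mem_ofPred_eq]
    _ ≤ ∑ e ∈ univ.filter (G.src · = j), μH[δ] (G.g e '' E (G.tgt e)) :=
        measure_biUnion_finset_le _ _
    _ ≤ _ := sum_le_sum fun e _ => (G.lipschitzWith_g e).hausdorffMeasure_image_le hδ _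

lemma le_childSum_of_isInvariant (hE : G.IsInvariant E) {δ : ℝ} (hδ : 0 ≤ δ)
    (hfin : ∀ j, μH[δ] (E j) < ⊤) {h : Fin N → ℝ} (hh : ∀ j, h j = (μH[δ] (E j)).toReal)
    (j : Fin N) : h j ≤ G.childSum δ h j := by
  have hterm : ∀ e : G.Edge, ENNReal.ofReal (G.r e) ^ δ * μH[δ] (E (G.tgt e)) ≠ ⊤ := fun e =>
    ENNReal.mul_ne_top (ENNReal.rpow_ne_top_of_nonneg hδ ENNReal.ofReal_ne_top) (hfin _).ne
  rw [hh, childSum]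
  refine ((ENNReal.toReal_le_toReal (hfin j).ne
    (ENNReal.sum_ne_top.mpr fun e _ => hterm e)).mpr
    (hausdorffMeasure_le_sum_of_isInvariant hE hδ j)).trans_eq ?_
  rw [ENNReal.toReal_sum fun e _ => hterm e]
  refine sum_congr rfl fun e _ => ?_
  rw [ENNReal.toReal_mul, ← ENNReal.toReal_rpow, ENNReal.toReal_ofReal (G.r_pos e).le, hh,
    mul_comm]

end GIFS

namespace OGIFS

open Finset GIFS

variable {X : Type} [MetricSpace X] {N : ℕ} (G : OGIFS X N) (δ : ℝ) (h : Fin N → ℝ)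

@[simp] lemma fPathMap_nil (x : ℝ) : G.fPathMap δ h [] x = x := rfl

@[simp] lemma fPathMap_cons (e : G.Edge) (l : List G.Edge) (x : ℝ) :
    G.fPathMap δ h (e :: l) x = G.r e ^ δ * G.fPathMap δ h l x + G.bCoef δ h e := rfl

lemma fPathMap_append (l₁ l₂ : List G.Edge) (x : ℝ) :
    G.fPathMap δ h (l₁ ++ l₂) x = G.fPathMap δ h l₁ (G.fPathMap δ h l₂ x) := by
  induction l₁ with
  | nil => rfl
  | cons e l ih => simp [ih]

lemma fPathMap_eq (l : List G.Edge) (x : ℝ) :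
    G.fPathMap δ h l x = G.pathRatio l ^ δ * x + G.fPathMap δ h l 0 := by
  induction l with
  | nil => simp
  | cons e l ih =>
    rw [fPathMap_cons, fPathMap_cons, ih, pathRatio_cons,
      Real.mul_rpow (G.r_pos e).le (G.pathRatio_pos l).le]
    ring

lemma strictMono_fPathMap (l : List G.Edge) : StrictMono (G.fPathMap δ h l) := fun x y hxy => by
  rw [fPathMap_eq, G.fPathMap_eq δ h l y]
  gcongr
  exact Real.rpow_pos_of_pos (G.pathRatio_pos l) δ

lemma fPathSet_subset_Icc (i : Fin N) (l : List G.Edge) :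
    G.fPathSet δ h i l ⊆ Icc (G.fPathMap δ h l 0) (G.fPathMap δ h l (h (G.pathTgt i l))) :=
  (G.strictMono_fPathMap δ h l).monotone.image_Icc_subset

variable {h}

open Classical in
lemma bCoef_add_eq_sum (e : G.Edge) :
    G.bCoef δ h e + h (G.tgt e) * G.r e ^ δ =
      ∑ e' ∈ insert e (univ.filter (G.elt · e)), h (G.tgt e') * G.r e' ^ δ := by
  rw [sum_insert (by simp [G.elt_irrefl]), bCoef, sum_filter, add_comm]

lemma bCoef_nonneg (hh : ∀ j, 0 ≤ h j) (e : G.Edge) : 0 ≤ G.bCoef δ h e :=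
  sum_nonneg fun e' _ => by
    split_ifs
    exacts [mul_nonneg (hh _) (Real.rpow_pos_of_pos (G.r_pos e') δ).le, le_rfl]

open Classical in
lemma bCoef_add_le_bCoef (hh : ∀ j, 0 ≤ h j) {e f : G.Edge} (hef : G.elt e f) :
    G.bCoef δ h e + h (G.tgt e) * G.r e ^ δ ≤ G.bCoef δ h f := by
  rw [bCoef_add_eq_sum, bCoef, ← sum_filter]
  refine sum_le_sum_of_subset_of_nonneg (subset_iff.mpr fun e' he' => ?_)
    fun e' _ _ => mul_nonneg (hh _) (Real.rpow_pos_of_pos (G.r_pos e') δ).le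
  simp only [Finset.mem_insert, Finset.mem_filter, Finset.mem_univ, true_and] at he' ⊢
  rcases he' with rfl | he'
  exacts [hef, G.elt_trans he' hef]

open Classical in
lemma bCoef_add_le_childSum (hh : ∀ j, 0 ≤ h j) (e : G.Edge) :
    G.bCoef δ h e + h (G.tgt e) * G.r e ^ δ ≤ G.childSum δ h (G.src e) := by
  rw [bCoef_add_eq_sum, childSum]
  refine sum_le_sum_of_subset_of_nonneg (subset_iff.mpr fun e' he' => ?_)
    fun e' _ _ => mul_nonneg (hh _) (Real.rpow_pos_of_pos (G.r_pos e') δ).le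
  simp only [Finset.mem_insert, Finset.mem_filter, Finset.mem_univ, true_and] at he' ⊢
  rcases he' with rfl | he'
  exacts [rfl, G.elt_src he']

open Classical in
/-- The witness is the `≺`-largest edge of `Γ_v`. -/
lemma exists_bCoef_add_eq_childSum {v : Fin N} (hv : ∃ e, G.src e = v) :
    ∃ e, G.src e = v ∧ G.bCoef δ h e + h (G.tgt e) * G.r e ^ δ = G.childSum δ h v := by
  have : IsTrans G.Edge (flip G.elt) := ⟨fun _ _ _ hab hbc => G.elt_trans hbc hab⟩
  have : Std.Irrefl (flip G.elt) := ⟨G.elt_irrefl⟩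
  obtain ⟨m, hm, hmax⟩ :=
    (Finite.wellFounded_of_trans_of_irrefl (flip G.elt)).has_min {e | G.src e = v} hv
  refine ⟨m, hm, ?_⟩
  rw [bCoef_add_eq_sum, childSum]
  congr 1
  refine Finset.ext fun e => ?_
  simp only [Finset.mem_insert, Finset.mem_filter, Finset.mem_univ, true_and]
  constructor
  · rintro (rfl | he)
    exacts [hm, (G.elt_src he).trans hm]
  · intro he
    rcases G.elt_total e m (he.trans hm.symm) with hem | rfl | hme
    exacts [Or.inr hem, Or.inl rfl, absurd hme (hmax e he)]

lemma fPathMap_zero_nonneg (hh : ∀ j, 0 ≤ h j) (l : List G.Edge) : 0 ≤ G.fPathMap δ h l 0 := by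
  induction l with
  | nil => simp
  | cons e l ih =>
    rw [fPathMap_cons]
    exact add_nonneg (mul_nonneg (Real.rpow_pos_of_pos (G.r_pos e) δ).le ih)
      (G.bCoef_nonneg δ hh e)

variable {G δ}

/-- `ρ` codes the path that first reaches `j` and then follows `μ`. -/
lemma fPathMap_prefixList_zero_le {i j : Fin N} {ρ : G.InfPath i → ℝ}
    (hρ : G.IsFCoding δ h i ρ) (hij : G.Reaches i j) (μ : G.InfPath j) (n : ℕ) :
    G.fPathMap δ h (prefixList μ.1 n) 0 ≤ h j := by
  obtain ⟨σ, hσ, hσj⟩ := hij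
  obtain ⟨θ, hθ⟩ := exists_infPath_prefixList_eq_append hσ hσj μ
  have hlow := (G.fPathSet_subset_Icc δ h i _ (hρ θ (σ.length + n))).1
  have hupp := (G.fPathSet_subset_Icc δ h i _ (hρ θ σ.length)).2
  rw [hθ n, fPathMap_append] at hlow
  rw [show prefixList θ.1 σ.length = σ by simpa [prefixList] using hθ 0, hσj] at hupp
  exact (G.strictMono_fPathMap δ h σ).le_iff_le.mp (hlow.trans hupp)

lemma childSum_le_fPathMap_childSum (hhS : ∀ v, h v ≤ G.childSum δ h v) {j : Fin N}
    {l : List G.Edge} (hl : G.IsPathFrom j l)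
    (htop : ∀ e ∈ l, G.bCoef δ h e + h (G.tgt e) * G.r e ^ δ = G.childSum δ h (G.src e)) :
    G.childSum δ h j ≤ G.fPathMap δ h l (G.childSum δ h (G.pathTgt j l)) := by
  induction l generalizing j with
  | nil => rfl
  | cons e l ih =>
    obtain ⟨rfl, hl'⟩ := isPathFrom_cons_iff.mp hl
    have hle := (hhS _).trans (ih hl' fun e' he' => htop e' (List.mem_cons_of_mem e he'))
    rw [pathTgt_cons, fPathMap_cons, ← htop e List.mem_cons_self]
    nlinarith [Real.rpow_pos_of_pos (G.r_pos e) δ]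

lemma childSum_le_of_reaches (hδ : 0 < δ) (hhS : ∀ v, h v ≤ G.childSum δ h v)
    (hout : ∀ v, ∃ e, G.src e = v) {i j : Fin N} {ρ : G.InfPath i → ℝ}
    (hρ : G.IsFCoding δ h i ρ) (hij : G.Reaches i j) : G.childSum δ h j ≤ h j := by
  obtain ⟨μ, hμ⟩ := G.exists_infPath_forall
    (fun e => G.bCoef δ h e + h (G.tgt e) * G.r e ^ δ = G.childSum δ h (G.src e))
    (fun v => by
      obtain ⟨e, rfl, he⟩ := G.exists_bCoef_add_eq_childSum δ (hout v)
      exact ⟨e, rfl, he⟩) j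
  obtain ⟨c, hc0, hc1, hc⟩ := G.exists_r_le_lt_one
  obtain ⟨C, hC⟩ := Finite.exists_le (G.childSum δ h)
  refine le_of_forall_le_add_mul_pow (C := max C 0) (Real.rpow_nonneg hc0 δ)
    (Real.rpow_lt_one hc0 hc1 hδ) fun n => ?_
  set l := prefixList μ.1 n
  have hratio : G.pathRatio l ^ δ ≤ (c ^ δ) ^ n := by
    rw [Real.rpow_pow_comm hc0]
    exact Real.rpow_le_rpow (G.pathRatio_pos l).le (by simpa [l] using G.pathRatio_le_pow hc l)
      hδ.le
  have hratio_nonneg : 0 ≤ G.pathRatio l ^ δ := Real.rpow_nonneg (G.pathRatio_pos l).le δ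
  calc G.childSum δ h j
      ≤ G.fPathMap δ h l (G.childSum δ h (G.pathTgt j l)) :=
        childSum_le_fPathMap_childSum hhS (isPathFrom_prefixList μ n) fun e he => by
          obtain ⟨k, rfl⟩ := mem_prefixList.mp he
          exact hμ k
    _ = G.pathRatio l ^ δ * G.childSum δ h (G.pathTgt j l) + G.fPathMap δ h l 0 :=
        G.fPathMap_eq δ h l _
    _ ≤ (c ^ δ) ^ n * max C 0 + h j :=
        add_le_add
          ((mul_le_mul_of_nonneg_left ((hC _).trans (le_max_left C 0)) hratio_nonneg).trans
            (mul_le_mul_of_nonneg_right hratio (le_max_right C 0)))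
          (fPathMap_prefixList_zero_le hρ hij μ n)
    _ = h j + max C 0 * (c ^ δ) ^ n := by ring

lemma fPathMap_pathTgt_le (hh : ∀ v, 0 ≤ h v) {j : Fin N}
    (hS : ∀ v, G.Reaches j v → G.childSum δ h v ≤ h v) {l : List G.Edge}
    (hl : G.IsPathFrom j l) : G.fPathMap δ h l (h (G.pathTgt j l)) ≤ h j := by
  induction l generalizing j with
  | nil => rfl
  | cons e l ih =>
    obtain ⟨rfl, hl'⟩ := isPathFrom_cons_iff.mp hl
    have hle := ih (fun v hv => hS v (hv.cons rfl)) hl'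
    have hsum := G.bCoef_add_le_childSum δ hh e
    have hSe := hS _ (G.reaches_refl _)
    rw [pathTgt_cons, fPathMap_cons]
    nlinarith [Real.rpow_pos_of_pos (G.r_pos e) δ]

/-- `F_α` lies to the left of `F_β`. -/
lemma fPathMap_pathTgt_le_fPathMap_zero (hh : ∀ v, 0 ≤ h v) {j : Fin N}
    (hS : ∀ v, G.Reaches j v → G.childSum δ h v ≤ h v) {α β : List G.Edge}
    (hα : G.IsPathFrom j α) (hβ : G.IsPathFrom j β) (hlen : α.length = β.length)
    (hlt : G.PathLt α β) : G.fPathMap δ h α (h (G.pathTgt j α)) ≤ G.fPathMap δ h β 0 := by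
  induction α generalizing j β with
  | nil =>
    cases β with
    | nil => cases hlt
    | cons => simp at hlen
  | cons e α ih =>
    cases β with
    | nil => cases hlt
    | cons f β =>
      obtain ⟨rfl, hα'⟩ := isPathFrom_cons_iff.mp hα
      obtain ⟨hf, hβ'⟩ := isPathFrom_cons_iff.mp hβ
      have hre : 0 < G.r e ^ δ := Real.rpow_pos_of_pos (G.r_pos e) δ
      rw [pathTgt_cons, fPathMap_cons, fPathMap_cons]
      cases hlt with
      | cons hlt' =>
        have := ih (fun v hv => hS v (hv.cons rfl)) hα' hβ' (by simpa using hlen) hlt'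
        nlinarith
      | rel hef =>
        have hup := fPathMap_pathTgt_le hh (fun v hv => hS v (hv.cons rfl)) hα'
        have hb := G.bCoef_add_le_bCoef δ hh hef
        have hβ0 := mul_nonneg (Real.rpow_pos_of_pos (G.r_pos f) δ).le
          (G.fPathMap_zero_nonneg δ hh β)
        nlinarith

lemma eq_or_pathLt_or_pathLt {j : Fin N} {α β : List G.Edge} (hα : G.IsPathFrom j α)
    (hβ : G.IsPathFrom j β) (hlen : α.length = β.length) :
    α = β ∨ G.PathLt α β ∨ G.PathLt β α := by
  induction α generalizing j β with
  | nil => exact Or.inl (List.length_eq_zero_iff.mp hlen.symm).symm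
  | cons e α ih =>
    cases β with
    | nil => simp at hlen
    | cons f β =>
      obtain ⟨he, hα'⟩ := isPathFrom_cons_iff.mp hα
      obtain ⟨hf, hβ'⟩ := isPathFrom_cons_iff.mp hβ
      rcases G.elt_total e f (he.trans hf.symm) with hef | rfl | hfe
      · exact Or.inr (Or.inl (List.Lex.rel hef))
      · rcases ih hα' hβ' (by simpa using hlen) with rfl | hlt | hlt
        exacts [Or.inl rfl, Or.inr (Or.inl (List.Lex.cons hlt)),
          Or.inr (Or.inr (List.Lex.cons hlt))]
      · exact Or.inr (Or.inr (List.Lex.rel hfe))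

/-- A third cylinder interval between the prefixes would have positive length, yet it is
squeezed between `ρ ω` and `ρ γ`. -/
lemma adjacent_of_fCoding_eq (hpos : ∀ v, 0 < h v) {i : Fin N}
    (hS : ∀ v, G.Reaches i v → G.childSum δ h v ≤ h v) {ρ : G.InfPath i → ℝ}
    (hρ : G.IsFCoding δ h i ρ) {ω γ : G.InfPath i} (hx : ρ ω = ρ γ) {n : ℕ}
    (hlt : G.PathLt (prefixList ω.1 n) (prefixList γ.1 n)) :
    G.Adjacent i (prefixList ω.1 n) (prefixList γ.1 n) := by
  refine ⟨isPathFrom_prefixList ω n, isPathFrom_prefixList γ n, by simp, hlt, ?_⟩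
  rintro ⟨η, hη, hηlen, hωη, hηγ⟩
  have hh v := (hpos v).le
  have hωη' := fPathMap_pathTgt_le_fPathMap_zero hh hS (isPathFrom_prefixList ω n) hη
    (by simp [hηlen]) hωη
  have hηγ' := fPathMap_pathTgt_le_fPathMap_zero hh hS hη (isPathFrom_prefixList γ n)
    (by simp [hηlen]) hηγ
  have hρω := (G.fPathSet_subset_Icc δ h i _ (hρ ω n)).2
  have hργ := (G.fPathSet_subset_Icc δ h i _ (hρ γ n)).1
  have hη_pos := G.strictMono_fPathMap δ h η (hpos (G.pathTgt i η))
  linarith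

lemma pathSet_inter_nonempty_of_fCoding_eq {E : Fin N → Set X} (hE : ∀ v, (E v).Nonempty)
    (hlin : G.IsLinear E) (hpos : ∀ v, 0 < h v) {i : Fin N}
    (hS : ∀ v, G.Reaches i v → G.childSum δ h v ≤ h v) {ρ : G.InfPath i → ℝ}
    (hρ : G.IsFCoding δ h i ρ) {ω γ : G.InfPath i} (hx : ρ ω = ρ γ) (n : ℕ) :
    (G.pathSet E i (prefixList ω.1 n) ∩ G.pathSet E i (prefixList γ.1 n)).Nonempty := by
  rcases eq_or_pathLt_or_pathLt (isPathFrom_prefixList ω n) (isPathFrom_prefixList γ n)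
    (by simp) with heq | hlt | hlt
  · rw [heq, inter_self]
    exact (hE _).image _
  · exact hlin i _ _ (adjacent_of_fCoding_eq hpos hS hρ hx hlt)
  · rw [inter_comm]
    exact hlin i _ _ (adjacent_of_fCoding_eq hpos hS hρ hx.symm hlt)

end OGIFS

noncomputable section
theorem two_rho_codings_same_pi_general {d N : ℕ} (G : OGIFS (EuclideanSpace ℝ (Fin d)) N)
    (E : Fin N → Set (EuclideanSpace ℝ (Fin d))) (hE : G.toGIFS.IsInvariant E) (hlin : G.IsLinear E)
    (δ : ℝ) (hδ : G.toGIFS.IsSimDim δ)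
    (hfin : ∀ j, 0 < μH[δ] (E j) ∧ μH[δ] (E j) < ⊤)
    (h : Fin N → ℝ) (hh : ∀ j, h j = (μH[δ] (E j)).toReal) (i : Fin N)
    (π : G.toGIFS.InfPath i → EuclideanSpace ℝ (Fin d)) (hπ : G.toGIFS.IsCoding E i π)
    (ρ : G.toGIFS.InfPath i → ℝ) (hρ : G.IsFCoding δ h i ρ)
    (ω γ : G.toGIFS.InfPath i) (hx : ρ ω = ρ γ) :
    π ω = π γ := by
  have hpos : ∀ j, 0 < h j := fun j =>
    hh j ▸ ENNReal.toReal_pos (hfin j).1.ne' (hfin j).2.ne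
  have hhS : ∀ j, h j ≤ G.childSum δ h j :=
    GIFS.le_childSum_of_isInvariant hE hδ.1.le (fun j => (hfin j).2) hh
  have hS : ∀ j, G.Reaches i j → G.childSum δ h j ≤ h j := fun _ =>
    OGIFS.childSum_le_of_reaches hδ.1 hhS hE.exists_src_eq hρ
  exact hπ.eq_of_forall_pathSet_inter_nonempty (fun j => (hE.2.1 j).isBounded)
    (OGIFS.pathSet_inter_nonempty_of_fCoding_eq hE.1 hlin hpos hS hρ hx)

/-- **Lemma 8.2.** If `x ∈ F_i` has two `ρ_i`-codings `ω, γ`, then `π_i(ω) = π_i(γ)`;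
consequently `ψ_i = π_i ∘ ρ_i⁻¹` is a well-defined map from `F_i` to `E_i`. -/
theorem two_rho_codings_same_pi {d N : ℕ} (G : OGIFS (EuclideanSpace ℝ (Fin d)) N)
    (E : Fin N → Set (EuclideanSpace ℝ (Fin d))) (hE : G.toGIFS.IsInvariant E) (hlin : G.IsLinear E)
    (hosc : G.toGIFS.OSC) (δ : ℝ) (hδ : G.toGIFS.IsSimDim δ)
    (hfin : ∀ j, 0 < μH[δ] (E j) ∧ μH[δ] (E j) < ⊤)
    (h : Fin N → ℝ) (hh : ∀ j, h j = (μH[δ] (E j)).toReal) (i : Fin N)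
    (π : G.toGIFS.InfPath i → EuclideanSpace ℝ (Fin d)) (hπ : G.toGIFS.IsCoding E i π)
    (ρ : G.toGIFS.InfPath i → ℝ) (hρ : G.IsFCoding δ h i ρ)
    (ω γ : G.toGIFS.InfPath i) (hx : ρ ω = ρ γ) :
    π ω = π γ :=
  two_rho_codings_same_pi_general G E hE hlin δ hδ hfin h hh i π hπ ρ hρ ω γ hx
end
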